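/- arXiv:2306.08119 — 3 statements merged into one kernel-verified Lean document; each statement's English description precedes it below -/
import Mathlib

section
/- The set of noncrossing partitions of a finite set P of points in the complex plane forms a lattice: every pair of noncrossing partitions has a unique meet and a unique join in the poset of noncrossing partitions ordered by refinement. -/
open scoped Classical

noncomputable section

/-- A partition of a finite planar point set `P ⊆ ℂ` is noncrossing if the convex hulls
of its blocks are pairwise disjoint. -/
def IsNoncrossing (P : Finset ℂ) (π : Finpartition P) : Prop :=
  ∀ B₁ ∈ π.parts, ∀ B₂ ∈ π.parts, B₁ ≠ B₂ →
    Disjoint (convexHull ℝ (B₁ : Set ℂ)) (convexHull ℝ (B₂ : Set ℂ))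

private lemma isNoncrossing_inf (P : Finset ℂ) {π₁ π₂ : Finpartition P}
    (h₁ : IsNoncrossing P π₁) (h₂ : IsNoncrossing P π₂) :
    IsNoncrossing P (π₁ ⊓ π₂) := by
  intro B₁ hB₁ B₂ hB₂ hne
  rw [Finpartition.parts_inf] at hB₁ hB₂
  obtain ⟨⟨A₁, C₁⟩, hAC₁, rfl⟩ := Finset.mem_image.1 (Finset.mem_of_mem_erase hB₁)
  obtain ⟨⟨A₂, C₂⟩, hAC₂, rfl⟩ := Finset.mem_image.1 (Finset.mem_of_mem_erase hB₂)
  rw [Finset.mem_product] at hAC₁ hAC₂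
  rcases eq_or_ne A₁ A₂ with rfl | hA
  · have hC : C₁ ≠ C₂ := by rintro rfl; exact hne rfl
    exact (h₂ C₁ hAC₁.2 C₂ hAC₂.2 hC).mono
      (convexHull_mono (by simp)) (convexHull_mono (by simp))
  · exact (h₁ A₁ hAC₁.1 A₂ hAC₂.1 hA).mono
      (convexHull_mono (by simp)) (convexHull_mono (by simp))

private lemma isNoncrossing_top (P : Finset ℂ) : IsNoncrossing P (⊤ : Finpartition P) := by
  intro B₁ hB₁ B₂ hB₂ hne
  exact absurd (Finpartition.parts_top_subsingleton P hB₁ hB₂) hne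

/-- The noncrossing partitions of a finite planar point set form a lattice under
refinement: every pair of noncrossing partitions has a unique meet and a unique join
among the noncrossing partitions. -/
theorem noncrossing_partitions_lattice (P : Finset ℂ) (π₁ π₂ : Finpartition P)
    (h₁ : IsNoncrossing P π₁) (h₂ : IsNoncrossing P π₂) :
    (∃! μ : Finpartition P, IsNoncrossing P μ ∧ μ ≤ π₁ ∧ μ ≤ π₂ ∧
      ∀ τ : Finpartition P, IsNoncrossing P τ → τ ≤ π₁ → τ ≤ π₂ → τ ≤ μ) ∧
    (∃! ν : Finpartition P, IsNoncrossing P ν ∧ π₁ ≤ ν ∧ π₂ ≤ ν ∧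
      ∀ τ : Finpartition P, IsNoncrossing P τ → π₁ ≤ τ → π₂ ≤ τ → ν ≤ τ) := by
  constructor
  · refine ⟨π₁ ⊓ π₂, ⟨isNoncrossing_inf P h₁ h₂, inf_le_left, inf_le_right,
      fun τ _ hτ₁ hτ₂ => le_inf hτ₁ hτ₂⟩, ?_⟩
    rintro μ' ⟨hμ'nc, hμ'₁, hμ'₂, hμ'max⟩
    exact le_antisymm (le_inf hμ'₁ hμ'₂)
      (hμ'max _ (isNoncrossing_inf P h₁ h₂) inf_le_left inf_le_right)
  · -- join: the infimum of all noncrossing common upper bounds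
    set S : Finset (Finpartition P) :=
      Finset.univ.filter (fun τ => IsNoncrossing P τ ∧ π₁ ≤ τ ∧ π₂ ≤ τ) with hS
    have htop : (⊤ : Finpartition P) ∈ S := by
      simp [hS, isNoncrossing_top P]
    have hne : S.Nonempty := ⟨⊤, htop⟩
    set ν : Finpartition P := S.inf' hne id with hν
    have hνmem : IsNoncrossing P ν ∧ π₁ ≤ ν ∧ π₂ ≤ ν := by
      have := Finset.inf'_mem (s := {τ : Finpartition P | IsNoncrossing P τ ∧ π₁ ≤ τ ∧ π₂ ≤ τ})
        (fun x hx y hy => ⟨isNoncrossing_inf P hx.1 hy.1, le_inf hx.2.1 hy.2.1,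
          le_inf hx.2.2 hy.2.2⟩) S hne id
        (fun i hi => by simpa [hS] using (Finset.mem_filter.1 hi).2)
      exact this
    have hνle : ∀ τ : Finpartition P, IsNoncrossing P τ → π₁ ≤ τ → π₂ ≤ τ → ν ≤ τ := by
      intro τ hτ hτ₁ hτ₂
      exact Finset.inf'_le id (by simp [hS, hτ, hτ₁, hτ₂])
    refine ⟨ν, ⟨hνmem.1, hνmem.2.1, hνmem.2.2, hνle⟩, ?_⟩
    rintro ν' ⟨hν'nc, hν'₁, hν'₂, hν'min⟩
    exact le_antisymm (hν'min _ hνmem.1 hνmem.2.1 hνmem.2.2) (hνle _ hν'nc hν'₁ hν'₂)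
end
end

section
/- A finite planar point set P in general position satisfies Property Δ_k (every convex subset A ⊆ P has at most |A| − 3 + k points of P in the interior of its convex hull) if and only if every subset B ⊆ P has at most ⌊(|B| − 3 + k)/2⌋ points of P ∩ B lying in the interior of Conv(B). -/
open scoped Classical

noncomputable section

/-- No three distinct points of `P` are collinear. -/
def GenPos (P : Finset ℂ) : Prop :=
  ∀ x ∈ P, ∀ y ∈ P, ∀ z ∈ P, x ≠ y → x ≠ z → y ≠ z → ¬ Collinear ℝ ({x, y, z} : Set ℂ)

/-- `A` is a convex subset of `P`: `A ⊆ P` and no point of `A` lies in the interior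
of the convex hull of `A`. -/
def ConvexSubset (P A : Finset ℂ) : Prop :=
  A ⊆ P ∧ ∀ a ∈ A, a ∉ interior (convexHull ℝ (A : Set ℂ))

/-- Points of `P` in the interior of the convex hull of `A`. -/
def intPts (P A : Finset ℂ) : Finset ℂ :=
  P.filter (fun x => x ∈ interior (convexHull ℝ (A : Set ℂ)))

/-- Property `Δ_k`: every convex subset `A ⊆ P` has at most `|A| + k - 3` points of `P`
in the interior of its convex hull. -/
def PropertyDelta (P : Finset ℂ) (k : ℕ) : Prop :=
  ∀ A : Finset ℂ, ConvexSubset P A →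
    ((intPts P A).card : ℤ) ≤ (A.card : ℤ) + (k : ℤ) - 3

/-- A point is internal for `P` if it lies in the interior of the convex hull of `P`. -/
def Internal (P : Finset ℂ) (x : ℂ) : Prop :=
  x ∈ interior (convexHull ℝ (P : Set ℂ))

/-- A point of `P` is extremal if it lies on the boundary of the convex hull of `P`. -/
def Extremal (P : Finset ℂ) (x : ℂ) : Prop :=
  x ∈ P ∧ ¬ Internal P x

/-- The line through two points, as a subset of the plane. -/
def lineThrough (u v : ℂ) : Set ℂ :=
  ↑(affineSpan ℝ ({u, v} : Set ℂ))

/-- Signed area test: the side of the line through `a, b` on which `x` lies. -/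
def cross2 (a b x : ℂ) : ℝ :=
  (b.re - a.re) * (x.im - a.im) - (b.im - a.im) * (x.re - a.re)

/-- The line through `w₁, w₂` is non-separating: all internal points of `P` lie
(weakly) on one side of it. -/
def NonSeparating (P : Finset ℂ) (w₁ w₂ : ℂ) : Prop :=
  (∀ x ∈ P, Internal P x → 0 ≤ cross2 w₁ w₂ x) ∨
  (∀ x ∈ P, Internal P x → cross2 w₁ w₂ x ≤ 0)

/-- A move of configurations: `z ∈ P` is replaced by a point `z'` lying in the interior of
a region of the complement of the arrangement `𝒜^z` (lines through pairs of points of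
`P - {z}`) adjacent to the region of `z`, the two regions being separated by the line `ℓ`
through `w₁, w₂ ∈ P`: the segment from `z` to `z'` crosses `ℓ` and no other line of `𝒜^z`. -/
def MoveAcross (P : Finset ℂ) (z z' w₁ w₂ : ℂ) : Prop :=
  z ∈ P ∧ w₁ ∈ P ∧ w₂ ∈ P ∧ w₁ ≠ w₂ ∧ z ≠ w₁ ∧ z ≠ w₂ ∧ z' ∉ P ∧
  z ∉ lineThrough w₁ w₂ ∧ z' ∉ lineThrough w₁ w₂ ∧
  (∃ p ∈ segment ℝ z z', p ∈ lineThrough w₁ w₂) ∧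
  (∀ u ∈ P, ∀ v ∈ P, u ≠ v → u ≠ z → v ≠ z → ({u, v} : Set ℂ) ≠ ({w₁, w₂} : Set ℂ) →
    ∀ p ∈ segment ℝ z z', p ∉ lineThrough u v)

/-- The configuration resulting from a move. -/
def movedConfig (P : Finset ℂ) (z z' : ℂ) : Finset ℂ :=
  insert z' (P.erase z)

/-- A `Δ_k`-move between configurations. -/
def DeltaMove (k : ℕ) (P Q : Finset ℂ) : Prop :=
  PropertyDelta P k ∧ PropertyDelta Q k ∧
  ∃ z z' w₁ w₂, MoveAcross P z z' w₁ w₂ ∧ Q = movedConfig P z z'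

/-- Every point of `P` lies on the boundary of the convex hull of `P`. -/
def ConvexPosition (P : Finset ℂ) : Prop :=
  ∀ x ∈ P, ¬ Internal P x

/-!
With `|B| = |A| + |I|`, the bound `2|I| ≤ |B| - 3 + k` is `|I| ≤ |A| + k - 3`, so both conditions
are the same inequality read through the correspondence between a subset `B` and its pair
(boundary points `A`, internal points `I`): `A` is convex with the same hull as `B`, and conversely a convex `A` together with the points
of `P` inside its hull is a subset `B` whose internal points include all of those.
-/

/-- Krein–Milman: the extreme points of the hull lie in `s` and off the interior. -/
theorem Set.Finite.convexHull_diff_interior_convexHull {E : Type*} [AddCommGroup E] [Module ℝ E]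
    [TopologicalSpace E] [T2Space E] [IsTopologicalAddGroup E] [ContinuousSMul ℝ E]
    [LocallyConvexSpace ℝ E] [Nontrivial E] {s : Set E} (hs : s.Finite) :
    convexHull ℝ (s \ interior (convexHull ℝ s)) = convexHull ℝ s := by
  refine (convexHull_mono Set.sdiff_subset).antisymm ?_
  have hext : (convexHull ℝ s).extremePoints ℝ ⊆ s \ interior (convexHull ℝ s) := fun x hx =>
    ⟨extremePoints_convexHull_subset hx,
      (disjoint_interior_extremePoints _).notMem_of_mem_right hx⟩
  calc convexHull ℝ s
      = closure (convexHull ℝ ((convexHull ℝ s).extremePoints ℝ)) :=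
        (closure_convexHull_extremePoints (hs.isCompact_convexHull (𝕜 := ℝ))
          (convex_convexHull ℝ s)).symm
    _ ⊆ closure (convexHull ℝ (s \ interior (convexHull ℝ s))) :=
        closure_mono (convexHull_mono hext)
    _ = convexHull ℝ (s \ interior (convexHull ℝ s)) :=
        (hs.sdiff.isCompact_convexHull (𝕜 := ℝ)).isClosed.closure_eq

open Finset

section

variable {P A B : Finset ℂ}

theorem convexHull_filter_not_internal (B : Finset ℂ) :
    convexHull ℝ (B.filter fun x => ¬ Internal B x : Set ℂ) = convexHull ℝ (B : Set ℂ) := by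
  rw [coe_filter]
  exact B.finite_toSet.convexHull_diff_interior_convexHull

theorem convexSubset_filter_not_internal (hB : B ⊆ P) :
    ConvexSubset P (B.filter fun x => ¬ Internal B x) := by
  refine ⟨(filter_subset _ _).trans hB, fun a ha => ?_⟩
  rw [convexHull_filter_not_internal]
  exact (mem_filter.1 ha).2

theorem intPts_self_subset_intPts_filter_not_internal (hB : B ⊆ P) :
    intPts B B ⊆ intPts P (B.filter fun x => ¬ Internal B x) := by
  intro x hx
  rw [intPts, mem_filter] at hx
  rw [intPts, mem_filter, convexHull_filter_not_internal]
  exact ⟨hB hx.1, hx.2⟩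

theorem card_filter_not_internal_add_card_intPts_self (B : Finset ℂ) :
    (B.filter fun x => ¬ Internal B x).card + (intPts B B).card = B.card := by
  rw [add_comm]
  exact card_filter_add_card_filter_not _

theorem ConvexSubset.card_union_intPts (hA : ConvexSubset P A) :
    (A ∪ intPts P A).card = A.card + (intPts P A).card :=
  card_union_of_disjoint <| disjoint_left.2 fun a ha hint => hA.2 a ha (mem_filter.1 hint).2

theorem intPts_subset_intPts_union_intPts (P A : Finset ℂ) :
    intPts P A ⊆ intPts (A ∪ intPts P A) (A ∪ intPts P A) := by
  intro x hx
  refine mem_filter.2 ⟨subset_union_right hx, interior_mono (convexHull_mono ?_) (mem_filter.1 hx).2⟩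
  rw [coe_union]
  exact Set.subset_union_left

end

theorem propertyDelta_iff_internal_bound_general (P : Finset ℂ) (k : ℕ) :
    PropertyDelta P k ↔
      ∀ B : Finset ℂ, B ⊆ P →
        2 * ((B.filter (fun x => x ∈ interior (convexHull ℝ (B : Set ℂ)))).card : ℤ)
          ≤ (B.card : ℤ) - 3 + (k : ℤ) := by
  change _ ↔ ∀ B : Finset ℂ, B ⊆ P → 2 * ((intPts B B).card : ℤ) ≤ _
  constructor
  · intro hΔ B hB
    have hcard := card_filter_not_internal_add_card_intPts_self B
    have hint := card_le_card (intPts_self_subset_intPts_filter_not_internal hB)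
    have := hΔ _ (convexSubset_filter_not_internal hB)
    omega
  · intro hbound A hA
    have hcard := hA.card_union_intPts
    have hint := card_le_card (intPts_subset_intPts_union_intPts P A)
    have := hbound (A ∪ intPts P A) (union_subset hA.1 (filter_subset _ P))
    omega

/-- `P` satisfies Property `Δ_k` iff every subset `B ⊆ P` has at most
`⌊(|B| − 3 + k)/2⌋` of its points lying in the interior of its convex hull. -/
theorem propertyDelta_iff_internal_bound (P : Finset ℂ) (k : ℕ) (hgp : GenPos P) :
    PropertyDelta P k ↔
      ∀ B : Finset ℂ, B ⊆ P →
        2 * ((B.filter (fun x => x ∈ interior (convexHull ℝ (B : Set ℂ)))).card : ℤ)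
          ≤ (B.card : ℤ) - 3 + (k : ℤ) :=
  propertyDelta_iff_internal_bound_general P k
end
end

section
/- Let P be a finite planar point set satisfying Property Δ₂, let T ⊆ 𝒜 be a skewering tree for P, and let ℓ, ℓ₁, ℓ₂ be distinct lines in T with ℓ a leaf and ℓ₁ skewering ℓ₂. Then the line ℓ does not intersect the convex hull of the four endpoints of ℓ₁ and ℓ₂. -/
open scoped Classical

noncomputable section

/-- A line of the arrangement `𝒜`: determined by two distinct points of `P`. -/
structure PLine (P : Finset ℂ) where
  a : ℂ
  b : ℂ
  ha : a ∈ P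
  hb : b ∈ P
  hab : a ≠ b

/-- The line itself, as a subset of the plane. -/
def PLine.carrier {P : Finset ℂ} (ℓ : PLine P) : Set ℂ := lineThrough ℓ.a ℓ.b

/-- The core of a line: the segment between its two endpoints. -/
def PLine.core {P : Finset ℂ} (ℓ : PLine P) : Set ℂ := segment ℝ ℓ.a ℓ.b

/-- The endpoints of a line. -/
def PLine.ends {P : Finset ℂ} (ℓ : PLine P) : Set ℂ := {ℓ.a, ℓ.b}

/-- `ℓ₁` skewers `ℓ₂`: the two (distinct) lines meet in a point lying in the core of
`ℓ₂` but not in the core of `ℓ₁`. -/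
def Skewers {P : Finset ℂ} (ℓ₁ ℓ₂ : PLine P) : Prop :=
  ℓ₁.carrier ≠ ℓ₂.carrier ∧
  ∃ p, p ∈ ℓ₁.carrier ∧ p ∈ ℓ₂.carrier ∧ p ∈ ℓ₂.core ∧ p ∉ ℓ₁.core

/-- Two distinct lines intersect internally if their cores meet. -/
def IntersectInternally {P : Finset ℂ} (ℓ₁ ℓ₂ : PLine P) : Prop :=
  ℓ₁.carrier ≠ ℓ₂.carrier ∧ ∃ p, p ∈ ℓ₁.core ∧ p ∈ ℓ₂.core

/-- `x` is the link vertex of the skewer `ℓ₁ ⊣ ℓ₂`: the endpoint of `ℓ₁` lying in the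
interior of the convex hull of the four endpoints. -/
def IsLinkVertex {P : Finset ℂ} (x : ℂ) (ℓ₁ ℓ₂ : PLine P) : Prop :=
  x ∈ ℓ₁.ends ∧ x ∈ interior (convexHull ℝ ({ℓ₁.a, ℓ₁.b, ℓ₂.a, ℓ₂.b} : Set ℂ))

/-- A skewering tree: a finite set of lines of the arrangement with a designated
initial line `init` and a chosen positive side of the initial line (the side of the
point `pos`), such that no two of its lines intersect internally, every non-initial
line is skewered by a unique line of the tree, and no point of the plane is the link
vertex of more than one skewer. -/
structure SkewTree (P : Finset ℂ) where
  lines : Set (PLine P)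
  finite : lines.Finite
  init : PLine P
  init_mem : init ∈ lines
  pos : ℂ
  pos_not_mem : pos ∉ init.carrier
  carrier_inj : ∀ ℓ₁ ∈ lines, ∀ ℓ₂ ∈ lines, ℓ₁.carrier = ℓ₂.carrier → ℓ₁ = ℓ₂
  no_internal : ∀ ℓ₁ ∈ lines, ∀ ℓ₂ ∈ lines, ℓ₁ ≠ ℓ₂ → ¬ IntersectInternally ℓ₁ ℓ₂
  skewered : ∀ ℓ ∈ lines, ℓ ≠ init → ∃! ℓ', ℓ' ∈ lines ∧ Skewers ℓ' ℓ
  link_unique : ∀ x : ℂ, ∀ ℓ₁ ∈ lines, ∀ ℓ₂ ∈ lines, ∀ ℓ₁' ∈ lines, ∀ ℓ₂' ∈ lines,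
    Skewers ℓ₁ ℓ₂ → Skewers ℓ₁' ℓ₂' → IsLinkVertex x ℓ₁ ℓ₂ → IsLinkVertex x ℓ₁' ℓ₂' →
    ℓ₁ = ℓ₁' ∧ ℓ₂ = ℓ₂'

/-- A leaf of a skewering tree: a non-initial line which skewers no line of the tree. -/
def SkewTree.IsLeaf {P : Finset ℂ} (T : SkewTree P) (ℓ : PLine P) : Prop :=
  ℓ ∈ T.lines ∧ ℓ ≠ T.init ∧ ∀ ℓ' ∈ T.lines, ¬ Skewers ℓ ℓ'

/-- The vertices of the planar realization lying on the line `ℓ`: intersections of `ℓ`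
with the other lines of the tree. -/
def SkewTree.verts {P : Finset ℂ} (T : SkewTree P) (ℓ : PLine P) : Set ℂ :=
  {p | p ∈ ℓ.carrier ∧ ∃ ℓ' ∈ T.lines, ℓ'.carrier ≠ ℓ.carrier ∧ p ∈ ℓ'.carrier}

/-- The part of the line `ℓ` kept in the planar realization `Γ_T`: the whole line minus
the open rays (unbounded components of the vertex-punctured line) not containing the
core of `ℓ`. -/
def SkewTree.realization {P : Finset ℂ} (T : SkewTree P) (ℓ : PLine P) : Set ℂ :=
  {p | p ∈ ℓ.carrier ∧
    ¬ (p ∉ T.verts ℓ ∧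
       (∀ x ∈ ℓ.core, ∃ v ∈ T.verts ℓ, v ∈ openSegment ℝ x p) ∧
       ¬ ∃ v ∈ T.verts ℓ, ∃ w ∈ T.verts ℓ, p ∈ openSegment ℝ v w)}

/-- The planar realization `Γ_T` of the skewering tree. -/
def SkewTree.graph {P : Finset ℂ} (T : SkewTree P) : Set ℂ :=
  ⋃ ℓ ∈ T.lines, T.realization ℓ

/-- A region of the complement of the planar realization `Γ_T`. -/
def SkewTree.IsRegion {P : Finset ℂ} (T : SkewTree P) (R : Set ℂ) : Prop :=
  ∃ x, x ∉ T.graph ∧ R = connectedComponentIn (T.graph)ᶜ x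

/-- `C` is the cell of the non-initial line `ℓ` of the tree `T`: the region of
`ℂ − Γ_T` whose boundary contains the core of `ℓ`, together with the part of the
realization of `ℓ` on its boundary. -/
def IsCellOf {P : Finset ℂ} (T : SkewTree P) (ℓ : PLine P) (C : Set ℂ) : Prop :=
  ℓ ∈ T.lines ∧ ℓ ≠ T.init ∧
  ∃ R, T.IsRegion R ∧ ℓ.core ⊆ closure R ∧
    C = R ∪ (T.realization ℓ ∩ closure R)

/-- `C` is the positive cell of the initial line: its region lies on the positive side
of the initial line, has the core on its boundary, and the cell includes the boundary
part of the realization of the initial line. -/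
def IsPosCell {P : Finset ℂ} (T : SkewTree P) (C : Set ℂ) : Prop :=
  ∃ R, T.IsRegion R ∧ T.init.core ⊆ closure R ∧
    (∃ x ∈ R, (affineSpan ℝ ({T.init.a, T.init.b} : Set ℂ)).SSameSide x T.pos ∧
      ∃ c ∈ T.init.core, openSegment ℝ x c ∩ T.graph = ∅) ∧
    C = R ∪ (T.realization T.init ∩ closure R)

/-- `C` is the negative cell of the initial line: the open region on the non-positive
side of the initial line having the core on its boundary. -/
def IsNegCell {P : Finset ℂ} (T : SkewTree P) (C : Set ℂ) : Prop :=
  ∃ R, T.IsRegion R ∧ T.init.core ⊆ closure R ∧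
    (∃ x ∈ R, (affineSpan ℝ ({T.init.a, T.init.b} : Set ℂ)).SOppSide x T.pos ∧
      ∃ c ∈ T.init.core, openSegment ℝ x c ∩ T.graph = ∅) ∧
    C = R

/-- `C` is a cell of the skewering tree `T`. -/
def IsCell {P : Finset ℂ} (T : SkewTree P) (C : Set ℂ) : Prop :=
  (∃ ℓ, IsCellOf T ℓ C) ∨ IsPosCell T C ∨ IsNegCell T C

/-!
Suppose `ℓ` meets the hull. The core of any other line of the tree misses `ℓ` (otherwise the two
would intersect internally or `ℓ` would skewer it), so `ℓ₁` and `ℓ₂` lie strictly on opposite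
sides of `ℓ`, and if `ℓ₁` skewers `ℓ₂` at `p` with link vertex `v`, the segment `vp` crosses `ℓ`
at a point `q` interior to the hull of the endpoints of the tree. A tree with `n` lines has `2n`
distinct endpoints and `n - 1` distinct link vertices, all interior to that hull; by `Δ₂` applied
to its extreme points, no further endpoint, in particular none of the leaf `ℓ`, is interior. So
`q` lies in the core of `ℓ` (else an endpoint of `ℓ` would lie between `q` and the other one),
`ℓ₁` skewers `ℓ` with the same link vertex `v`, and uniqueness of link vertices forces `ℓ = ℓ₂`.
-/

open Set AffineMap
open scoped ComplexConjugate Finset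

section Betweenness

variable {E : Type*} [AddCommGroup E] [Module ℝ E]

theorem Sbtw.mem_openSegment {x y z : E} (h : Sbtw ℝ x y z) : y ∈ openSegment ℝ x z := by
  rw [openSegment_eq_image_lineMap]
  exact h.mem_image_Ioo

theorem exists_sbtw_apply_eq_zero (g : E →ᵃ[ℝ] ℝ) {x y : E} (hx : 0 < g x) (hy : g y < 0) :
    ∃ z, Sbtw ℝ x z y ∧ g z = 0 := by
  have hd : 0 < g x - g y := by linarith
  set t := g x / (g x - g y)
  refine ⟨lineMap x y t, sbtw_iff_mem_image_Ioo_and_ne.2 ⟨⟨t, ⟨?_, ?_⟩, rfl⟩, ?_⟩, ?_⟩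
  · positivity
  · rw [div_lt_one hd]; linarith
  · rintro rfl; linarith
  · rw [g.apply_lineMap, lineMap_apply_ring']
    simp only [t]
    field_simp
    ring

theorem Convex.forall_pos_or_forall_neg {s : Set E} (hs : Convex ℝ s) (g : E →ᵃ[ℝ] ℝ)
    (h : ∀ z ∈ s, g z ≠ 0) : (∀ z ∈ s, 0 < g z) ∨ (∀ z ∈ s, g z < 0) := by
  by_contra! ⟨⟨x, hx, hgx⟩, y, hy, hgy⟩
  obtain ⟨z, hz, hgz⟩ :=
    exists_sbtw_apply_eq_zero g (lt_of_le_of_ne hgy (h y hy).symm) (lt_of_le_of_ne hgx (h x hx))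
  exact h z (hs.segment_subset hy hx (mem_segment_iff_wbtw.2 hz.wbtw)) hgz

theorem sbtw_or_sbtw_of_mem_affineSpan_pair {a b p : E} (hab : a ≠ b)
    (hp : p ∈ line[ℝ, a, b]) (hps : p ∉ segment ℝ a b) : Sbtw ℝ a b p ∨ Sbtw ℝ b a p := by
  have hpa : p ≠ a := by rintro rfl; exact hps (left_mem_segment ℝ _ _)
  have hpb : p ≠ b := by rintro rfl; exact hps (right_mem_segment ℝ _ _)
  rcases (collinear_insert_of_mem_affineSpan_pair hp).wbtw_or_wbtw_or_wbtw with h | h | h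
  · exact Or.inr ⟨h.symm, hab, hpa.symm⟩
  · exact Or.inl ⟨h, hab.symm, hpb.symm⟩
  · exact absurd (mem_segment_iff_wbtw.2 h.symm) hps

end Betweenness

section Triangle

variable {V : Type*} [NormedAddCommGroup V] [NormedSpace ℝ V] [FiniteDimensional ℝ V]

theorem mem_interior_convexHull_of_sbtw (hV : Module.finrank ℝ V = 2) {a b c x y : V}
    (habc : ¬ Collinear ℝ ({a, b, c} : Set V)) (hx : Sbtw ℝ b x c) (hy : Sbtw ℝ a y x) :
    y ∈ interior (convexHull ℝ ({a, b, c} : Set V)) := by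
  have hind := affineIndependent_iff_not_collinear_set.2 habc
  let B : AffineBasis (Fin 3) ℝ V :=
    ⟨![a, b, c], hind, by rw [hind.affineSpan_eq_top_iff_card_eq_finrank_add_one]; simp [hV]⟩
  have hB : range B = {a, b, c} := by
    change range ![a, b, c] = _
    ext
    simp only [mem_range, Fin.exists_fin_succ, mem_insert_iff, mem_singleton_iff]
    simp [eq_comm]
  obtain ⟨s, ⟨hs₀, hs₁⟩, rfl⟩ := hx.mem_image_Ioo
  obtain ⟨t, ⟨ht₀, ht₁⟩, rfl⟩ := hy.mem_image_Ioo
  rw [← hB, B.interior_convexHull]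
  intro i
  -- the barycentric coordinates of `y` are `1 - t`, `t * (1 - s)` and `t * s`
  simp only [show a = B 0 from rfl, show b = B 1 from rfl, show c = B 2 from rfl,
    AffineMap.apply_lineMap, B.coord_apply, lineMap_apply_ring]
  fin_cases i <;>
    simp only [Fin.zero_eta, Fin.mk_one, Fin.reduceFinMk, Fin.isValue, ↓reduceIte, Fin.reduceEq,
      zero_ne_one, one_ne_zero, mul_one, mul_zero, add_zero, zero_add] <;>
    nlinarith [mul_pos ht₀ hs₀, mul_pos ht₀ (sub_pos.2 hs₁)]

end Triangle

theorem Complex.exists_affineMap_eq_zero_iff_mem_line {c d : ℂ} (hcd : c ≠ d) :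
    ∃ g : ℂ →ᵃ[ℝ] ℝ, ∀ y, g y = 0 ↔ y ∈ line[ℝ, c, d] := by
  set w := d - c
  have hw : w.re ^ 2 + w.im ^ 2 ≠ 0 := by
    have := Complex.normSq_pos.2 (sub_ne_zero.2 hcd.symm)
    rw [Complex.normSq_apply] at this
    nlinarith
  let L : ℂ →ₗ[ℝ] ℝ := Complex.imLm ∘ₗ LinearMap.mulLeft ℝ (conj w)
  let g := L.toAffineMap - AffineMap.const ℝ ℂ (L c)
  have hg : ∀ y, g y = w.re * (y.im - c.im) - w.im * (y.re - c.re) := fun y => by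
    simp only [LinearMap.coe_comp, Complex.imLm_coe, Function.comp_apply, LinearMap.mulLeft_apply,
      Complex.mul_im, Complex.conj_re, Complex.conj_im, neg_mul, AffineMap.coe_sub,
      LinearMap.coe_toAffineMap, AffineMap.coe_const, Pi.sub_apply, Function.const_apply, g, L]
    ring
  refine ⟨g, fun y => ?_⟩
  simp only [hg, mem_affineSpan_pair_iff_exists_lineMap_eq, lineMap_apply_module',
    Complex.ext_iff, Complex.add_re, Complex.add_im, Complex.smul_re, Complex.smul_im,
    smul_eq_mul]
  constructor
  · intro h
    refine ⟨(w.re * (y.re - c.re) + w.im * (y.im - c.im)) / (w.re ^ 2 + w.im ^ 2), ?_, ?_⟩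
    · field_simp
      linear_combination w.im * h
    · field_simp
      linear_combination -w.re * h
  · rintro ⟨r, hre, him⟩
    rw [← hre, ← him]
    ring

theorem Complex.exists_affineMap_eq_zero_iff_mem_line_and_pos {c d z : ℂ} (hcd : c ≠ d)
    (hz : z ∉ line[ℝ, c, d]) :
    ∃ g : ℂ →ᵃ[ℝ] ℝ, (∀ y, g y = 0 ↔ y ∈ line[ℝ, c, d]) ∧ 0 < g z := by
  obtain ⟨g, hg⟩ := Complex.exists_affineMap_eq_zero_iff_mem_line hcd
  rcases lt_or_gt_of_ne (mt (hg z).1 hz) with hneg | hpos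
  · exact ⟨-g, fun y => by simp [hg], by simpa using hneg⟩
  · exact ⟨g, hg, hpos⟩

theorem Set.Finite.convexHull_extremePoints_convexHull {E : Type*} [NormedAddCommGroup E]
    [NormedSpace ℝ E] {s : Set E} (hs : s.Finite) :
    convexHull ℝ ((convexHull ℝ s).extremePoints ℝ) = convexHull ℝ s := by
  rw [← ((hs.subset extremePoints_convexHull_subset).isClosed_convexHull ℝ).closure_eq]
  exact closure_convexHull_extremePoints (hs.isCompact_convexHull ℝ) (convex_convexHull ℝ s)

theorem two_mul_card_lt_of_subset_interior {P E I : Finset ℂ}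
    (hΔ : ∀ A, ConvexSubset P A → A.Nonempty → #(intPts P A) < #A)
    (hEP : E ⊆ P) (hE : E.Nonempty) (hIE : I ⊆ E)
    (hI : ∀ x ∈ I, x ∈ interior (convexHull ℝ (E : Set ℂ))) : 2 * #I < #E := by
  set A := E.filter (· ∈ (convexHull ℝ (E : Set ℂ)).extremePoints ℝ)
  have hAE : A ⊆ E := Finset.filter_subset _ _
  have hA : convexHull ℝ (A : Set ℂ) = convexHull ℝ (E : Set ℂ) := by
    have hAext : (A : Set ℂ) = (convexHull ℝ (E : Set ℂ)).extremePoints ℝ := by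
      ext x
      simpa [A] using fun h => Finset.mem_coe.1 (extremePoints_convexHull_subset h)
    rw [hAext]
    exact E.finite_toSet.convexHull_extremePoints_convexHull
  have hAconv : ConvexSubset P A := by
    refine ⟨hAE.trans hEP, fun a ha hai => ?_⟩
    rw [hA] at hai
    exact Set.disjoint_left.1 (disjoint_interior_extremePoints _) hai (Finset.mem_filter.1 ha).2
  have hAne : A.Nonempty := by
    rw [← Finset.coe_nonempty, ← convexHull_nonempty_iff (𝕜 := ℝ), hA, convexHull_nonempty_iff]
    exact hE
  have hIA : I ⊆ intPts P A := fun x hx =>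
    Finset.mem_filter.2 ⟨hEP (hIE hx), hA ▸ hI x hx⟩
  have hdisj : Disjoint A I := Finset.disjoint_left.2 fun a ha haI =>
    hAconv.2 a ha (Finset.mem_filter.1 (hIA haI)).2
  have hAI := Finset.card_le_card (Finset.union_subset hAE hIE)
  rw [Finset.card_union_of_disjoint hdisj] at hAI
  have hIint := Finset.card_le_card hIA
  have hAint := hΔ A hAconv hAne
  omega

namespace PLine

variable {P : Finset ℂ} (ℓ : PLine P)

theorem ends_subset : ℓ.ends ⊆ P := by
  rintro x (rfl | rfl)
  exacts [ℓ.ha, ℓ.hb]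

theorem a_mem_ends : ℓ.a ∈ ℓ.ends := Or.inl rfl

theorem b_mem_ends : ℓ.b ∈ ℓ.ends := Or.inr rfl

theorem core_eq_convexHull : ℓ.core = convexHull ℝ ℓ.ends := (convexHull_pair ℓ.a ℓ.b).symm

theorem ends_subset_core : ℓ.ends ⊆ ℓ.core := ℓ.core_eq_convexHull ▸ subset_convexHull ℝ _

theorem core_subset_carrier : ℓ.core ⊆ ℓ.carrier :=
  (affineSpan ℝ _).convex.segment_subset (left_mem_affineSpan_pair ℝ _ _)
    (right_mem_affineSpan_pair ℝ _ _)

theorem mem_carrier_of_sbtw {u v q : ℂ} (hℓ : ℓ.ends = {u, v}) (h : Sbtw ℝ u v q) :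
    q ∈ ℓ.carrier := by
  change q ∈ affineSpan ℝ ℓ.ends
  rw [hℓ]
  exact h.wbtw.collinear.mem_affineSpan_of_mem_of_ne (by simp) (by simp) (by simp) h.left_ne

theorem notMem_core_of_sbtw {u v q : ℂ} (hℓ : ℓ.ends = {u, v}) (h : Sbtw ℝ u v q) :
    q ∉ ℓ.core := by
  rw [ℓ.core_eq_convexHull, hℓ, convexHull_pair, mem_segment_iff_wbtw]
  exact h.not_swap_right

end PLine

theorem GenPos.notMem_carrier {P : Finset ℂ} (hgp : GenPos P) {ℓ : PLine P} {x : ℂ}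
    (hx : x ∈ P) (hxℓ : x ∉ ℓ.ends) : x ∉ ℓ.carrier := fun h =>
  hgp x hx ℓ.a ℓ.ha ℓ.b ℓ.hb (fun h' => hxℓ (Or.inl h')) (fun h' => hxℓ (Or.inr h')) ℓ.hab
    (collinear_insert_of_mem_affineSpan_pair h)

section Skewers

variable {P : Finset ℂ} {α β : PLine P}

theorem Skewers.ne (h : Skewers α β) : α ≠ β := by
  rintro rfl
  exact h.1 rfl

theorem Skewers.exists_sbtw (h : Skewers α β) :
    ∃ u v p, α.ends = {u, v} ∧ Sbtw ℝ u v p ∧ p ∈ α.carrier ∧ p ∈ β.core := by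
  obtain ⟨-, p, hpα, -, hpβ, hpcore⟩ := h
  rcases sbtw_or_sbtw_of_mem_affineSpan_pair α.hab hpα hpcore with h | h
  · exact ⟨α.a, α.b, p, rfl, h, hpα, hpβ⟩
  · exact ⟨α.b, α.a, p, Set.pair_comm _ _, h, hpα, hpβ⟩

theorem isLinkVertex_of_sbtw {u v p : ℂ} (hα : α.ends = {u, v}) (hu : u ∉ β.carrier)
    (hp : Sbtw ℝ β.a p β.b) (huv : Sbtw ℝ u v p) : IsLinkVertex v α β := by
  have hends : u ∈ α.ends ∧ v ∈ α.ends := by simp [hα]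
  have hsub : ({u, β.a, β.b} : Set ℂ) ⊆ {α.a, α.b, β.a, β.b} :=
    insert_subset (hends.1.imp_right Or.inl) ((subset_insert _ _).trans (subset_insert _ _))
  refine ⟨hends.2, interior_mono (convexHull_mono hsub) ?_⟩
  refine mem_interior_convexHull_of_sbtw Complex.finrank_real_complex (fun hcol => hu ?_) hp huv
  exact hcol.mem_affineSpan_of_mem_of_ne (by simp) (by simp) (by simp) β.hab

end Skewers

namespace SkewTree

variable {P : Finset ℂ} (T : SkewTree P) {α β : PLine P}

theorem carrier_ne (hα : α ∈ T.lines) (hβ : β ∈ T.lines) (hne : α ≠ β) :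
    α.carrier ≠ β.carrier :=
  fun h => hne (T.carrier_inj α hα β hβ h)

theorem disjoint_ends (hα : α ∈ T.lines) (hβ : β ∈ T.lines) (hne : α ≠ β) :
    Disjoint α.ends β.ends :=
  Set.disjoint_left.2 fun x hxα hxβ => T.no_internal α hα β hβ hne
    ⟨T.carrier_ne hα hβ hne, x, α.ends_subset_core hxα, β.ends_subset_core hxβ⟩

theorem notMem_carrier_of_mem_ends (hgp : GenPos P) (hα : α ∈ T.lines) (hβ : β ∈ T.lines)
    (hne : α ≠ β) {x : ℂ} (hx : x ∈ α.ends) : x ∉ β.carrier :=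
  hgp.notMem_carrier (α.ends_subset hx) (Set.disjoint_left.1 (T.disjoint_ends hα hβ hne) hx)

theorem sbtw_of_mem_carrier_of_mem_core (hgp : GenPos P) (hα : α ∈ T.lines) (hβ : β ∈ T.lines)
    (hne : α ≠ β) {p : ℂ} (hpα : p ∈ α.carrier) (hpβ : p ∈ β.core) : Sbtw ℝ β.a p β.b := by
  have hends : ∀ x ∈ β.ends, p ≠ x := fun x hx hpx =>
    T.notMem_carrier_of_mem_ends hgp hβ hα hne.symm hx (hpx ▸ hpα)
  exact ⟨mem_segment_iff_wbtw.1 hpβ, hends _ β.a_mem_ends, hends _ β.b_mem_ends⟩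

theorem exists_isLinkVertex (hgp : GenPos P) (hα : α ∈ T.lines) (hβ : β ∈ T.lines)
    (h : Skewers α β) :
    ∃ u v p, α.ends = {u, v} ∧ Sbtw ℝ u v p ∧ p ∈ β.core ∧ IsLinkVertex v α β := by
  obtain ⟨u, v, p, hends, huvp, hpα, hpβ⟩ := h.exists_sbtw
  refine ⟨u, v, p, hends, huvp, hpβ, isLinkVertex_of_sbtw hends ?_
    (T.sbtw_of_mem_carrier_of_mem_core hgp hα hβ h.ne hpα hpβ) huvp⟩
  exact T.notMem_carrier_of_mem_ends hgp hα hβ h.ne (by simp [hends])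

def ends : Finset ℂ :=
  T.finite.toFinset.biUnion fun α => {α.a, α.b}

theorem mem_ends {x : ℂ} : x ∈ T.ends ↔ ∃ α ∈ T.lines, x ∈ α.ends := by
  simp [ends, PLine.ends]

theorem ends_subset : T.ends ⊆ P := fun x hx => by
  obtain ⟨α, -, hx⟩ := T.mem_ends.1 hx
  exact α.ends_subset hx

theorem ends_subset_ends (hα : α ∈ T.lines) : α.ends ⊆ T.ends :=
  fun _ hx => T.mem_ends.2 ⟨α, hα, hx⟩

theorem card_ends : #T.ends = 2 * #T.finite.toFinset := by
  rw [ends, Finset.card_biUnion, Finset.sum_congr rfl fun α _ => Finset.card_pair α.hab,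
    Finset.sum_const, smul_eq_mul, mul_comm]
  intro α hα β hβ hne
  simpa [Function.onFun, ← Finset.disjoint_coe, PLine.ends] using
    T.disjoint_ends (T.finite.mem_toFinset.1 hα) (T.finite.mem_toFinset.1 hβ) hne

theorem convexHull_subset_convexHull_ends (hα : α ∈ T.lines) (hβ : β ∈ T.lines) :
    convexHull ℝ {α.a, α.b, β.a, β.b} ⊆ convexHull ℝ (T.ends : Set ℂ) :=
  convexHull_mono <| insert_subset (T.ends_subset_ends hα α.a_mem_ends) <|
    insert_subset (T.ends_subset_ends hα α.b_mem_ends) (T.ends_subset_ends hβ)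

def linkVertices : Finset ℂ :=
  T.ends.filter fun x => ∃ α ∈ T.lines, ∃ β ∈ T.lines, Skewers α β ∧ IsLinkVertex x α β

theorem linkVertices_subset : T.linkVertices ⊆ T.ends := Finset.filter_subset _ _

theorem mem_interior_of_mem_linkVertices {x : ℂ} (hx : x ∈ T.linkVertices) :
    x ∈ interior (convexHull ℝ (T.ends : Set ℂ)) := by
  obtain ⟨α, hα, β, hβ, -, -, hint⟩ := (Finset.mem_filter.1 hx).2
  exact interior_mono (T.convexHull_subset_convexHull_ends hα hβ) hint

theorem card_linkVertices (hgp : GenPos P) : #T.finite.toFinset - 1 ≤ #T.linkVertices := by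
  have hlines : ∀ β ∈ T.finite.toFinset.erase T.init, β ∈ T.lines := fun β hβ =>
    T.finite.mem_toFinset.1 (Finset.mem_of_mem_erase hβ)
  have : ∀ β ∈ T.finite.toFinset.erase T.init, ∃ x ∈ T.linkVertices,
      ∃ α ∈ T.lines, Skewers α β ∧ IsLinkVertex x α β := by
    intro β hβ
    obtain ⟨α, ⟨hα, hsk⟩, -⟩ := T.skewered β (hlines β hβ) (Finset.ne_of_mem_erase hβ)
    obtain ⟨-, v, -, -, -, -, hv⟩ := T.exists_isLinkVertex hgp hα (hlines β hβ) hsk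
    exact ⟨v, Finset.mem_filter.2 ⟨T.ends_subset_ends hα hv.1, α, hα, β, hlines β hβ, hsk, hv⟩,
      α, hα, hsk, hv⟩
  choose! f hf using this
  rw [← Finset.card_erase_of_mem (T.finite.mem_toFinset.2 T.init_mem)]
  refine Finset.card_le_card_of_injOn f (fun β hβ => (hf β hβ).1) fun β₁ h₁ β₂ h₂ heq => ?_
  obtain ⟨-, α₁, hα₁, hsk₁, hv₁⟩ := hf β₁ h₁
  obtain ⟨-, α₂, hα₂, hsk₂, hv₂⟩ := hf β₂ h₂
  exact (T.link_unique _ α₁ hα₁ β₁ (hlines β₁ h₁) α₂ hα₂ β₂ (hlines β₂ h₂) hsk₁ hsk₂ hv₁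
    (heq ▸ hv₂)).2

end SkewTree

namespace SkewTree.IsLeaf

variable {P : Finset ℂ} {T : SkewTree P} {β ℓ : PLine P}

theorem disjoint_core_carrier (hℓ : T.IsLeaf ℓ) (hβ : β ∈ T.lines) (hne : β ≠ ℓ) :
    Disjoint β.core ℓ.carrier := by
  refine Set.disjoint_left.2 fun z hzβ hzℓ => ?_
  have hcar := T.carrier_ne hℓ.1 hβ hne.symm
  by_cases hz : z ∈ ℓ.core
  · exact T.no_internal ℓ hℓ.1 β hβ hne.symm ⟨hcar, z, hz, hzβ⟩
  · exact hℓ.2.2 β hβ ⟨hcar, z, hzℓ, β.core_subset_carrier hzβ, hzβ, hz⟩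

theorem notMem_linkVertices (hℓ : T.IsLeaf ℓ) {x : ℂ} (hx : x ∈ ℓ.ends) :
    x ∉ T.linkVertices := by
  intro hxv
  obtain ⟨α, hα, β, hβ, hsk, hxα, -⟩ := (Finset.mem_filter.1 hxv).2
  have hne : α ≠ ℓ := by
    rintro rfl
    exact hℓ.2.2 β hβ hsk
  exact Set.disjoint_left.1 (T.disjoint_ends hα hℓ.1 hne) hxα hx

theorem notMem_interior_convexHull_ends (hgp : GenPos P)
    (hΔ : ∀ A, ConvexSubset P A → A.Nonempty → #(intPts P A) < #A) (hℓ : T.IsLeaf ℓ)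
    {x : ℂ} (hx : x ∈ ℓ.ends) : x ∉ interior (convexHull ℝ (T.ends : Set ℂ)) := by
  intro hxint
  have hxE : x ∈ T.ends := T.ends_subset_ends hℓ.1 hx
  have hlt := two_mul_card_lt_of_subset_interior hΔ T.ends_subset ⟨x, hxE⟩
    (Finset.insert_subset hxE T.linkVertices_subset) fun y hy => by
      rcases Finset.mem_insert.1 hy with rfl | hy
      exacts [hxint, T.mem_interior_of_mem_linkVertices hy]
  rw [Finset.card_insert_of_notMem (hℓ.notMem_linkVertices hx), T.card_ends] at hlt
  have := T.card_linkVertices hgp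
  omega

theorem mem_core_of_mem_interior (hgp : GenPos P)
    (hΔ : ∀ A, ConvexSubset P A → A.Nonempty → #(intPts P A) < #A) (hℓ : T.IsLeaf ℓ)
    {q : ℂ} (hq : q ∈ ℓ.carrier) (hqint : q ∈ interior (convexHull ℝ (T.ends : Set ℂ))) :
    q ∈ ℓ.core := by
  by_contra hqcore
  have key {w w' : ℂ} (hends : ℓ.ends = {w', w}) (h : Sbtw ℝ w' w q) : False := by
    have hw' : w' ∈ convexHull ℝ (T.ends : Set ℂ) :=
      subset_convexHull ℝ _ (T.ends_subset_ends hℓ.1 (by simp [hends]))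
    refine hℓ.notMem_interior_convexHull_ends hgp hΔ (show w ∈ ℓ.ends by simp [hends]) ?_
    refine (convex_convexHull ℝ _).openSegment_interior_self_subset_interior hqint hw' ?_
    rw [openSegment_symm]
    exact h.mem_openSegment
  rcases sbtw_or_sbtw_of_mem_affineSpan_pair ℓ.hab hq hqcore with h | h
  · exact key rfl h
  · exact key (Set.pair_comm _ _) h

theorem exists_affineMap_separating (hgp : GenPos P) (hℓ : T.IsLeaf ℓ) {ℓ₁ ℓ₂ : PLine P}
    (h₁ : ℓ₁ ∈ T.lines) (h₂ : ℓ₂ ∈ T.lines) (hne₁ : ℓ ≠ ℓ₁) (hne₂ : ℓ ≠ ℓ₂)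
    (hmeet : ∃ x ∈ ℓ.carrier, x ∈ convexHull ℝ {ℓ₁.a, ℓ₁.b, ℓ₂.a, ℓ₂.b}) :
    ∃ g : ℂ →ᵃ[ℝ] ℝ, (∀ y, g y = 0 ↔ y ∈ ℓ.carrier) ∧ (∀ z ∈ ℓ₁.core, 0 < g z) ∧
      (∀ z ∈ ℓ₂.core, g z < 0) := by
  obtain ⟨g, hg, hg₁⟩ := Complex.exists_affineMap_eq_zero_iff_mem_line_and_pos ℓ.hab
    (T.notMem_carrier_of_mem_ends hgp h₁ hℓ.1 hne₁.symm ℓ₁.a_mem_ends)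
  have hside {β : PLine P} (hβ : β ∈ T.lines) (hne : β ≠ ℓ) :
      (∀ z ∈ β.core, 0 < g z) ∨ (∀ z ∈ β.core, g z < 0) :=
    (convex_segment _ _).forall_pos_or_forall_neg g fun z hz h0 =>
      Set.disjoint_left.1 (hℓ.disjoint_core_carrier hβ hne) hz ((hg z).1 h0)
  have hpos : ∀ z ∈ ℓ₁.core, 0 < g z := (hside h₁ hne₁.symm).resolve_right fun h =>
    (h _ (left_mem_segment ℝ _ _)).not_gt hg₁
  refine ⟨g, hg, hpos, (hside h₂ hne₂.symm).resolve_left fun h₂pos => ?_⟩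
  obtain ⟨x, hxℓ, hx⟩ := hmeet
  have hsub : {ℓ₁.a, ℓ₁.b, ℓ₂.a, ℓ₂.b} ⊆ g ⁻¹' Ioi 0 := by
    rintro z (rfl | rfl | rfl | rfl)
    exacts [hpos _ (left_mem_segment ℝ _ _), hpos _ (right_mem_segment ℝ _ _),
      h₂pos _ (left_mem_segment ℝ _ _), h₂pos _ (right_mem_segment ℝ _ _)]
  have hxpos : 0 < g x := convexHull_min hsub ((convex_Ioi 0).affine_preimage g) hx
  exact hxpos.ne' ((hg x).2 hxℓ)

end SkewTree.IsLeaf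

theorem leaf_disjoint_skewer_hull_general (P : Finset ℂ) (hgp : GenPos P)
    (hΔ : PropertyDelta P 2) (T : SkewTree P) (ℓ ℓ₁ ℓ₂ : PLine P)
    (hℓ : T.IsLeaf ℓ) (h₁ : ℓ₁ ∈ T.lines) (h₂ : ℓ₂ ∈ T.lines)
    (hne₁ : ℓ ≠ ℓ₁) (hne₂ : ℓ ≠ ℓ₂)
    (hsk : Skewers ℓ₁ ℓ₂) :
    Disjoint ℓ.carrier (convexHull ℝ ({ℓ₁.a, ℓ₁.b, ℓ₂.a, ℓ₂.b} : Set ℂ)) := by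
  have hΔ' : ∀ A, ConvexSubset P A → A.Nonempty → #(intPts P A) < #A := fun A hA _ => by
    have := hΔ A hA
    omega
  refine Set.disjoint_left.2 fun x hxℓ hx => ?_
  obtain ⟨g, hg, hpos, hneg⟩ :=
    hℓ.exists_affineMap_separating hgp h₁ h₂ hne₁ hne₂ ⟨x, hxℓ, hx⟩
  obtain ⟨u, v, p, hends, huvp, hp₂, hv₂⟩ := T.exists_isLinkVertex hgp h₁ h₂ hsk
  obtain ⟨q, hvqp, hq⟩ := exists_sbtw_apply_eq_zero g (hpos v (ℓ₁.ends_subset_core hv₂.1))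
    (hneg p hp₂)
  have hqℓ : q ∈ ℓ.carrier := (hg q).1 hq
  have hqint : q ∈ interior (convexHull ℝ (T.ends : Set ℂ)) :=
    (convex_convexHull ℝ _).openSegment_interior_self_subset_interior
      (interior_mono (T.convexHull_subset_convexHull_ends h₁ h₂) hv₂.2)
      (convexHull_mono (T.ends_subset_ends h₂) (ℓ₂.core_eq_convexHull ▸ hp₂))
      hvqp.mem_openSegment
  have hqcore := hℓ.mem_core_of_mem_interior hgp hΔ' hqℓ hqint
  have huvq : Sbtw ℝ u v q := huvp.trans_right_left hvqp
  have hq₁ : q ∈ ℓ₁.carrier := ℓ₁.mem_carrier_of_sbtw hends huvq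
  have hsk' : Skewers ℓ₁ ℓ := ⟨T.carrier_ne h₁ hℓ.1 hne₁.symm, q, hq₁, hqℓ, hqcore,
    ℓ₁.notMem_core_of_sbtw hends huvq⟩
  have hv : IsLinkVertex v ℓ₁ ℓ := isLinkVertex_of_sbtw hends
    (fun hu => (hpos u (ℓ₁.ends_subset_core (by simp [hends]))).ne' ((hg u).2 hu))
    (T.sbtw_of_mem_carrier_of_mem_core hgp h₁ hℓ.1 hne₁.symm hq₁ hqcore) huvq
  exact hne₂ (T.link_unique v ℓ₁ h₁ ℓ₂ h₂ ℓ₁ h₁ ℓ hℓ.1 hsk hsk' hv₂ hv).2.symm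

/-- If `P` satisfies Property `Δ₂`, `T` is a skewering tree, `ℓ` is a leaf of `T`, and
`ℓ₁ ⊣ ℓ₂` in `T` with `ℓ, ℓ₁, ℓ₂` distinct, then the line `ℓ` does not intersect the
convex hull of the four endpoints of `ℓ₁` and `ℓ₂`. -/
theorem leaf_disjoint_skewer_hull (P : Finset ℂ) (hgp : GenPos P)
    (hΔ : PropertyDelta P 2) (T : SkewTree P) (ℓ ℓ₁ ℓ₂ : PLine P)
    (hℓ : T.IsLeaf ℓ) (h₁ : ℓ₁ ∈ T.lines) (h₂ : ℓ₂ ∈ T.lines)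
    (hne₁ : ℓ ≠ ℓ₁) (hne₂ : ℓ ≠ ℓ₂) (hne₃ : ℓ₁ ≠ ℓ₂)
    (hsk : Skewers ℓ₁ ℓ₂) :
    Disjoint ℓ.carrier (convexHull ℝ ({ℓ₁.a, ℓ₁.b, ℓ₂.a, ℓ₂.b} : Set ℂ)) :=
  leaf_disjoint_skewer_hull_general P hgp hΔ T ℓ ℓ₁ ℓ₂ hℓ h₁ h₂ hne₁ hne₂ hsk
end
end
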